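/- Reynolds' transport theorem (volume form) for a domain transported by a flow: for every t ∈ ℝ, the function G(t) = ∫_{Ω(t)} u(t,x) dx is differentiable and G'(t) = ∫_{Ω(t)} ( ∂ₜu(t,x) + div( β(t,·) u(t,·) )(x) ) dx, where div(β(t,·)u(t,·)) is the spatial divergence of the vector field x ↦ u(t,x)β(t,x). -/

import Mathlib

/-!
Pulling the integral back to `Ω₀` along `x ↦ Φ(s, x)` turns it into
`G(s) = ∫_{Ω₀} J(s, x) u(s, Φ(s, x)) dx` with `J = det DΦ`. Jacobi's formula and
`∂ₜDΦ = Dβ(Φ) DΦ` give Liouville's equation `∂ₜJ = (div β)(Φ) J`, so `J = exp ∫ (div β)(Φ) > 0`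
and the absolute value in the change of variables disappears. The integrand is now `C¹` in `s`,
jointly continuous, and `Ω₀` is bounded, so we may differentiate under the integral sign; the
derivative `J (∂ₜu + Du β + u div β)(Φ) = J (∂ₜu + div (u β))(Φ)` is pulled forward again.
-/
open MeasureTheory

noncomputable section

/-- Euclidean space `ℝ^d`. -/
abbrev Euc (d : ℕ) : Type := EuclideanSpace ℝ (Fin d)

/-- Divergence of a vector field: the trace of its Fréchet derivative. -/
noncomputable def vdiv {d : ℕ} (w : Euc d → Euc d) (x : Euc d) : ℝ :=
  LinearMap.trace ℝ (Euc d) (fderiv ℝ w x).toLinearMap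

namespace Matrix

variable {ι : Type*} [Fintype ι] [DecidableEq ι]

def detRowContinuousMultilinear : ContinuousMultilinearMap ℝ (fun _ : ι => ι → ℝ) ℝ :=
  { (detRowAlternating (n := ι) (R := ℝ)).toMultilinearMap with
    cont := (continuous_id (X := Matrix ι ι ℝ)).matrix_det }

theorem hasDerivAt_det_of_hasDerivAt_mul {A : ℝ → Matrix ι ι ℝ} {B : Matrix ι ι ℝ} {t : ℝ}
    (hA : ∀ i j, HasDerivAt (fun s => A s i j) ((B * A t) i j) t) :
    HasDerivAt (fun s => (A s).det) (B.trace * (A t).det) t := by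
  -- rows live in `ι → ι → ℝ`, which (unlike `Matrix ι ι ℝ`) carries a norm
  have hrows : HasDerivAt (fun s => (fun i j => A s i j : ι → ι → ℝ))
      (fun i j => (B * A t) i j) t :=
    hasDerivAt_pi.2 fun i => hasDerivAt_pi.2 fun j => hA i j
  have hrow_update (i : ι) :
      detRowContinuousMultilinear (Function.update (fun i j => A t i j) i
        (fun j => (B * A t) i j)) = B i i * (A t).det := by
    have hrow : (fun j => (B * A t) i j) = ∑ k, B i k • A t k := by
      ext j
      simp [Matrix.mul_apply, Finset.sum_apply]
    rw [hrow]
    exact det_updateRow_sum (A t) i (B i)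
  have h := (detRowContinuousMultilinear.hasFDerivAt (fun i j => A t i j)).comp_hasDerivAt t hrows
  refine h.congr_deriv ?_
  rw [ContinuousMultilinearMap.linearDeriv_apply]
  simp only [hrow_update, trace, diag, ← Finset.sum_mul]

end Matrix

theorem ContinuousLinearMap.hasDerivAt_det_of_hasDerivAt_comp {E : Type*}
    [NormedAddCommGroup E] [NormedSpace ℝ E] [FiniteDimensional ℝ E]
    {L : ℝ → E →L[ℝ] E} {B : E →L[ℝ] E} {t : ℝ} (hL : HasDerivAt L (B.comp (L t)) t) :
    HasDerivAt (fun s => (L s).det) (LinearMap.trace ℝ E B * (L t).det) t := by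
  let b := Module.finBasis ℝ E
  let toMat : (E →L[ℝ] E) →ₗ[ℝ] Matrix (Fin (Module.finrank ℝ E)) (Fin (Module.finrank ℝ E)) ℝ
    := (LinearMap.toMatrix b b).toLinearMap ∘ₗ ContinuousLinearMap.coeLM ℝ
  have hentries (i j) : HasDerivAt (fun s => toMat (L s) i j) ((toMat B * toMat (L t)) i j) t := by
    let entry := (LinearMap.proj j ∘ₗ LinearMap.proj i ∘ₗ toMat).toContinuousLinearMap
    have h := entry.hasFDerivAt.comp_hasDerivAt t hL
    refine h.congr_deriv ?_
    change LinearMap.toMatrix b b (B ∘ₗ (L t : E →ₗ[ℝ] E)) i j = _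
    rw [LinearMap.toMatrix_comp b b b]
    rfl
  have h := Matrix.hasDerivAt_det_of_hasDerivAt_mul hentries
  simp only [toMat, LinearMap.coe_comp, Function.comp_apply, LinearEquiv.coe_coe,
    ContinuousLinearMap.coeLM_apply, LinearMap.det_toMatrix,
    ← LinearMap.trace_eq_matrix_trace] at h
  exact h

theorem ContinuousLinearMap.continuous_trace {E : Type*} [NormedAddCommGroup E] [NormedSpace ℝ E]
    [FiniteDimensional ℝ E] :
    Continuous fun L : E →L[ℝ] E => LinearMap.trace ℝ E L :=
  (LinearMap.trace ℝ E ∘ₗ ContinuousLinearMap.coeLM ℝ).continuous_of_finiteDimensional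

theorem eq_mul_exp_integral_of_hasDerivAt_eq_mul {j c : ℝ → ℝ} (hc : Continuous c)
    (hj : ∀ s, HasDerivAt j (c s * j s) s) (s : ℝ) :
    j s = j 0 * Real.exp (∫ r in (0 : ℝ)..s, c r) := by
  set I : ℝ → ℝ := fun s => ∫ r in (0 : ℝ)..s, c r
  have hI (r : ℝ) : HasDerivAt I (c r) r :=
    intervalIntegral.integral_hasDerivAt_right (hc.intervalIntegrable _ _)
      hc.stronglyMeasurable.stronglyMeasurableAtFilter hc.continuousAt
  -- the integrating factor `exp (-I)` turns `j` into a constant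
  have hconst (r : ℝ) : HasDerivAt (fun r => j r * Real.exp (-I r)) 0 r :=
    ((hj r).mul (hI r).neg.exp).congr_deriv (by ring)
  have h := is_const_of_deriv_eq_zero (fun r => (hconst r).differentiableAt)
    (fun r => (hconst r).deriv) s 0
  simp only [I, intervalIntegral.integral_same, neg_zero, Real.exp_zero, mul_one] at h
  rw [← h, mul_assoc, ← Real.exp_add, neg_add_cancel, Real.exp_zero, mul_one]

open Bornology in
theorem hasDerivAt_setIntegral_of_continuous {X G : Type*} [MetricSpace X] [ProperSpace X]
    [MeasurableSpace X] [BorelSpace X] [NormedAddCommGroup G] [NormedSpace ℝ G]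
    (μ : Measure X) [IsFiniteMeasureOnCompacts μ] {S : Set X} (hS : IsBounded S)
    {F F' : ℝ → X → G} (hF : Continuous (Function.uncurry F))
    (hF' : Continuous (Function.uncurry F'))
    (hFF' : ∀ s x, HasDerivAt (F · x) (F' s x) s) (t : ℝ) :
    HasDerivAt (fun s => ∫ x in S, F s x ∂μ) (∫ x in S, F' t x ∂μ) t := by
  have hK : IsCompact (Set.Icc (t - 1) (t + 1) ×ˢ closure S) :=
    isCompact_Icc.prod hS.isCompact_closure
  obtain ⟨C, hC⟩ := hK.exists_bound_of_continuousOn hF'.continuousOn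
  have hslice {H : ℝ → X → G} (hH : Continuous (Function.uncurry H)) (s : ℝ) :
      Continuous (H s) :=
    hH.comp (continuous_const.prodMk continuous_id)
  have hbound : ∀ᵐ x ∂μ.restrict S, ∀ s ∈ Metric.ball t 1, ‖F' s x‖ ≤ C := by
    filter_upwards [ae_restrict_of_ae_restrict_of_subset subset_closure
      (ae_restrict_mem isClosed_closure.measurableSet)] with x hx s hs
    rw [Real.ball_eq_Ioo] at hs
    exact hC (s, x) ⟨Set.Ioo_subset_Icc_self hs, hx⟩
  refine (hasDerivAt_integral_of_dominated_loc_of_deriv_le (Metric.ball_mem_nhds t one_pos)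
    (.of_forall fun s => (hslice hF s).aestronglyMeasurable)
    (((hslice hF t).continuousOn.integrableOn_compact hS.isCompact_closure).mono_set
      subset_closure)
    (hslice hF' t).aestronglyMeasurable hbound
    (integrableOn_const hS.measure_lt_top.ne)
    (.of_forall fun x s _ => hFF' s x)).2

section PartialDerivatives

variable {E F : Type*} [NormedAddCommGroup E] [NormedSpace ℝ E] [NormedAddCommGroup F]
  [NormedSpace ℝ F] {f : ℝ → E → F} {s : ℝ} {y : E}

theorem hasDerivAt_comp_of_differentiableAt_uncurry {γ : ℝ → E} {v : E}
    (hf : DifferentiableAt ℝ (Function.uncurry f) (s, γ s)) (hγ : HasDerivAt γ v s) :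
    HasDerivAt (fun r => f r (γ r)) (fderiv ℝ (Function.uncurry f) (s, γ s) (1, v)) s := by
  exact hf.hasFDerivAt.comp_hasDerivAt s ((hasDerivAt_id s).prodMk hγ)

theorem hasFDerivAt_of_differentiableAt_uncurry
    (hf : DifferentiableAt ℝ (Function.uncurry f) (s, y)) :
    HasFDerivAt (f s)
      ((fderiv ℝ (Function.uncurry f) (s, y)).comp (ContinuousLinearMap.inr ℝ ℝ E)) y :=
  hf.hasFDerivAt.comp y (hasFDerivAt_prodMk_right s y)

theorem deriv_eq_fderiv_uncurry (hf : DifferentiableAt ℝ (Function.uncurry f) (s, y)) :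
    deriv (fun r => f r y) s = fderiv ℝ (Function.uncurry f) (s, y) (1, 0) :=
  (hasDerivAt_comp_of_differentiableAt_uncurry (γ := fun _ => y) hf
    (hasDerivAt_const s y)).deriv

theorem hasDerivAt_comp_eq_deriv_add_fderiv {γ : ℝ → E} {v : E}
    (hf : DifferentiableAt ℝ (Function.uncurry f) (s, γ s)) (hγ : HasDerivAt γ v s) :
    HasDerivAt (fun r => f r (γ r))
      (deriv (fun r => f r (γ s)) s + fderiv ℝ (f s) (γ s) v) s := by
  refine (hasDerivAt_comp_of_differentiableAt_uncurry hf hγ).congr_deriv ?_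
  rw [deriv_eq_fderiv_uncurry hf, (hasFDerivAt_of_differentiableAt_uncurry hf).fderiv,
    ContinuousLinearMap.comp_apply, ContinuousLinearMap.inr_apply, ← map_add,
    Prod.mk_add_mk, add_zero, zero_add]

theorem continuous_deriv_of_contDiff_uncurry (hf : ContDiff ℝ 1 (Function.uncurry f)) :
    Continuous fun p : ℝ × E => deriv (fun r => f r p.2) p.1 := by
  simp_rw [deriv_eq_fderiv_uncurry (hf.differentiable one_ne_zero _)]
  exact (hf.continuous_fderiv one_ne_zero).clm_apply continuous_const

theorem continuous_fderiv_of_contDiff_uncurry (hf : ContDiff ℝ 1 (Function.uncurry f)) :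
    Continuous fun p : ℝ × E => fderiv ℝ (f p.1) p.2 := by
  simp_rw [(hasFDerivAt_of_differentiableAt_uncurry (hf.differentiable one_ne_zero _)).fderiv]
  exact (hf.continuous_fderiv one_ne_zero).clm_comp continuous_const

end PartialDerivatives

section Divergence

variable {d : ℕ}

theorem vdiv_smul {f : Euc d → ℝ} {w : Euc d → Euc d} {y : Euc d}
    (hf : DifferentiableAt ℝ f y) (hw : DifferentiableAt ℝ w y) :
    vdiv (fun z => f z • w z) y = f y * vdiv w y + fderiv ℝ f y (w y) := by
  rw [vdiv, fderiv_fun_smul hf hw, ContinuousLinearMap.toLinearMap_add, map_add,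
    ContinuousLinearMap.toLinearMap_smul, map_smul, smul_eq_mul]
  exact congrArg _ (LinearMap.trace_smulRight (fderiv ℝ f y : Euc d →ₗ[ℝ] ℝ) (w y))

theorem continuous_vdiv_of_contDiff_uncurry {w : ℝ → Euc d → Euc d}
    (hw : ContDiff ℝ 1 (Function.uncurry w)) :
    Continuous fun p : ℝ × Euc d => vdiv (w p.1) p.2 :=
  ContinuousLinearMap.continuous_trace.comp (continuous_fderiv_of_contDiff_uncurry hw)

end Divergence

section Flow

variable {E : Type*} [NormedAddCommGroup E] [NormedSpace ℝ E] [FiniteDimensional ℝ E]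
  {β Φ : ℝ → E → E} {DΦ : ℝ → E → E →L[ℝ] E}

theorem det_fderiv_flow_pos (hβ : ContDiff ℝ 1 (Function.uncurry β))
    (hΦ : Continuous (Function.uncurry Φ)) (hΦ0 : ∀ x, Φ 0 x = x)
    (hDΦ : ∀ t x, HasFDerivAt (Φ t) (DΦ t x) x)
    (hDΦt : ∀ t x, HasDerivAt (fun s => DΦ s x) ((fderiv ℝ (β t) (Φ t x)).comp (DΦ t x)) t)
    (s : ℝ) (x : E) : 0 < (DΦ s x).det := by
  have hc : Continuous fun r => LinearMap.trace ℝ E (fderiv ℝ (β r) (Φ r x)) :=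
    ContinuousLinearMap.continuous_trace.comp ((continuous_fderiv_of_contDiff_uncurry hβ).comp
      (continuous_id.prodMk (hΦ.comp (continuous_id.prodMk continuous_const))))
  have hDΦ0 : DΦ 0 x = ContinuousLinearMap.id ℝ E :=
    (hDΦ 0 x).unique (by rw [funext hΦ0]; exact hasFDerivAt_id x)
  rw [eq_mul_exp_integral_of_hasDerivAt_eq_mul hc
    (fun r => ContinuousLinearMap.hasDerivAt_det_of_hasDerivAt_comp (hDΦt r x)) s,
    hDΦ0]
  simp [ContinuousLinearMap.det, Real.exp_pos]

end Flow

section Transport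

variable {d : ℕ} {β Φ : ℝ → Euc d → Euc d} {DΦ : ℝ → Euc d → Euc d →L[ℝ] Euc d}
  {u : ℝ → Euc d → ℝ}

theorem hasDerivAt_det_mul_comp_flow (hβ : ContDiff ℝ 1 (Function.uncurry β))
    (hu : ContDiff ℝ 1 (Function.uncurry u)) {t : ℝ} {x : Euc d}
    (hΦt : HasDerivAt (fun s => Φ s x) (β t (Φ t x)) t)
    (hDΦt : HasDerivAt (fun s => DΦ s x) ((fderiv ℝ (β t) (Φ t x)).comp (DΦ t x)) t) :
    HasDerivAt (fun s => (DΦ s x).det * u s (Φ s x))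
      ((DΦ t x).det * (deriv (fun s => u s (Φ t x)) t
        + vdiv (fun y => u t y • β t y) (Φ t x))) t := by
  have hu_diff := hu.differentiable one_ne_zero (t, Φ t x)
  refine ((ContinuousLinearMap.hasDerivAt_det_of_hasDerivAt_comp hDΦt).mul
    (hasDerivAt_comp_eq_deriv_add_fderiv hu_diff hΦt)).congr_deriv ?_
  rw [vdiv_smul (hasFDerivAt_of_differentiableAt_uncurry hu_diff).differentiableAt
    (hasFDerivAt_of_differentiableAt_uncurry
      (hβ.differentiable one_ne_zero (t, Φ t x))).differentiableAt, vdiv]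
  ring

end Transport

theorem reynolds_transport_theorem_general
    (d : ℕ)
    (β : ℝ → Euc d → Euc d)
    (hβ : ContDiff ℝ 1 (fun p : ℝ × Euc d => β p.1 p.2))
    (Φ : ℝ → Euc d → Euc d)
    (hΦ0 : ∀ x, Φ 0 x = x)
    (hΦt : ∀ t x, HasDerivAt (fun s => Φ s x) (β t (Φ t x)) t)
    (hΦC1 : ContDiff ℝ 1 (fun p : ℝ × Euc d => Φ p.1 p.2))
    (hΦinj : ∀ t : ℝ, Function.Injective (Φ t))
    (DΦ : ℝ → Euc d → Euc d →L[ℝ] Euc d)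
    (hDΦ : ∀ t x, HasFDerivAt (Φ t) (DΦ t x) x)
    (hDΦcont : Continuous fun p : ℝ × Euc d => DΦ p.1 p.2)
    (hDΦt : ∀ t x, HasDerivAt (fun s => DΦ s x)
        ((fderiv ℝ (β t) (Φ t x)).comp (DΦ t x)) t)
    (Ω₀ : Set (Euc d)) (hΩ₀bdd : Bornology.IsBounded Ω₀) (hΩ₀meas : MeasurableSet Ω₀)
    (u : ℝ → Euc d → ℝ)
    (hu : ContDiff ℝ 1 (fun p : ℝ × Euc d => u p.1 p.2)) :
    ∀ t : ℝ,
      HasDerivAt (fun s => ∫ x in Φ s '' Ω₀, u s x)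
        (∫ x in Φ t '' Ω₀,
          (deriv (fun s => u s x) t + vdiv (fun y => u t y • β t y) x)) t := by
  intro t
  have hJpos := det_fderiv_flow_pos hβ hΦC1.continuous hΦ0 hDΦ hDΦt
  have hchange (s : ℝ) (g : Euc d → ℝ) :
      ∫ x in Φ s '' Ω₀, g x = ∫ x in Ω₀, (DΦ s x).det * g (Φ s x) := by
    rw [integral_image_eq_integral_abs_det_fderiv_smul volume hΩ₀meas
      (fun x _ => (hDΦ s x).hasFDerivWithinAt) (hΦinj s).injOn g]
    simp_rw [abs_of_pos (hJpos s _), smul_eq_mul]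
  simp_rw [hchange]
  have hJ : Continuous fun p : ℝ × Euc d => (DΦ p.1 p.2).det :=
    ContinuousLinearMap.continuous_det.comp hDΦcont
  have hΦp : Continuous fun p : ℝ × Euc d => (p.1, Φ p.1 p.2) :=
    continuous_fst.prodMk hΦC1.continuous
  refine hasDerivAt_setIntegral_of_continuous volume hΩ₀bdd ?_ ?_
    (fun s x => hasDerivAt_det_mul_comp_flow hβ hu (hΦt s x) (hDΦt s x)) t
  · exact hJ.mul (hu.continuous.comp hΦp)
  · exact hJ.mul (((continuous_deriv_of_contDiff_uncurry hu).add
      (continuous_vdiv_of_contDiff_uncurry (w := fun s y => u s y • β s y)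
        (hu.smul hβ))).comp hΦp)

/-- Reynolds' transport theorem (volume form): `G(t) = ∫_{Ω(t)} u(t,x) dx` is differentiable
with `G'(t) = ∫_{Ω(t)} (∂ₜu + div(β(t,·) u(t,·)))(x) dx`, where `Ω(t) = Φ(t,·)'' Ω₀`. -/
theorem reynolds_transport_theorem
    (d : ℕ) (hd : 1 ≤ d)
    (β : ℝ → Euc d → Euc d)
    (hβ : ContDiff ℝ 1 (fun p : ℝ × Euc d => β p.1 p.2))
    (hβbdd : ∃ C : ℝ, ∀ p : ℝ × Euc d,
      ‖fderiv ℝ (fun q : ℝ × Euc d => β q.1 q.2) p‖ ≤ C)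
    (Φ : ℝ → Euc d → Euc d)
    (hΦ0 : ∀ x, Φ 0 x = x)
    (hΦt : ∀ t x, HasDerivAt (fun s => Φ s x) (β t (Φ t x)) t)
    (hΦC1 : ContDiff ℝ 1 (fun p : ℝ × Euc d => Φ p.1 p.2))
    (hΦinj : ∀ t : ℝ, Function.Injective (Φ t))
    (DΦ : ℝ → Euc d → Euc d →L[ℝ] Euc d)
    (hDΦ : ∀ t x, HasFDerivAt (Φ t) (DΦ t x) x)
    (hDΦcont : Continuous fun p : ℝ × Euc d => DΦ p.1 p.2)
    (hDΦt : ∀ t x, HasDerivAt (fun s => DΦ s x)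
        ((fderiv ℝ (β t) (Φ t x)).comp (DΦ t x)) t)
    (Ω₀ : Set (Euc d)) (hΩ₀bdd : Bornology.IsBounded Ω₀) (hΩ₀meas : MeasurableSet Ω₀)
    (u : ℝ → Euc d → ℝ)
    (hu : ContDiff ℝ 1 (fun p : ℝ × Euc d => u p.1 p.2))
    (hubdd : ∃ C : ℝ, ∀ p : ℝ × Euc d,
      |u p.1 p.2| ≤ C ∧ ‖fderiv ℝ (fun q : ℝ × Euc d => u q.1 q.2) p‖ ≤ C) :
    ∀ t : ℝ,
      HasDerivAt (fun s => ∫ x in Φ s '' Ω₀, u s x)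
        (∫ x in Φ t '' Ω₀,
          (deriv (fun s => u s x) t + vdiv (fun y => u t y • β t y) x)) t :=
  reynolds_transport_theorem_general d β hβ Φ hΦ0 hΦt hΦC1 hΦinj DΦ hDΦ hDΦcont hDΦt Ω₀ hΩ₀bdd
    hΩ₀meas u hu

end
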